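/- If L^(-i) is the empty graph, U^(-i) is the complete graph, and there exists −j with −i ≤ −j ≤ 0 such that L^(-j) = U^(-j), then for every trajectory of the sandwiched Gibbs chain Y started from any state at time −i (coupled via the same updates), Y^(-j) = L^(-j); consequently all such trajectories agree at time 0. -/
import Mathlib

/-- Subgraph relation on adjacency matrices. -/
def SubG {n : ℕ} (y y' : Fin n → Fin n → Bool) : Prop :=
  ∀ a b, y a b = true → y' a b = true

/-- Sandwich coalescence: time is reindexed so that `0` corresponds to `−i` and
`T` to `0`. If `L` starts at the empty graph, `U` at the complete graph, every
trajectory of the coupled chain (driven by the deterministic-given-coins update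
`step`) is sandwiched between `L` and `U`, and `L` and `U` coincide at some
time `j ≤ T`, then every trajectory equals `L` at time `j`, and all
trajectories agree at time `T`. -/
theorem sandwich_coalescence {n : ℕ}
    (step : ℕ → (Fin n → Fin n → Bool) → (Fin n → Fin n → Bool))
    (L U : ℕ → (Fin n → Fin n → Bool)) (j T : ℕ) (hjT : j ≤ T)
    (hL0 : L 0 = fun _ _ => false) (hU0 : U 0 = fun _ _ => true)
    (inv : ∀ Y : ℕ → (Fin n → Fin n → Bool),
      (∀ t, Y (t + 1) = step t (Y t)) → ∀ t, SubG (L t) (Y t) ∧ SubG (Y t) (U t))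
    (hcoal : L j = U j) :
    (∀ Y : ℕ → (Fin n → Fin n → Bool),
      (∀ t, Y (t + 1) = step t (Y t)) → Y j = L j) ∧
    (∀ Y Y' : ℕ → (Fin n → Fin n → Bool),
      (∀ t, Y (t + 1) = step t (Y t)) → (∀ t, Y' (t + 1) = step t (Y' t)) →
      Y T = Y' T) := by
  have key : ∀ Y : ℕ → (Fin n → Fin n → Bool),
      (∀ t, Y (t + 1) = step t (Y t)) → Y j = L j := by
    intro Y hY
    obtain ⟨h1, h2⟩ := inv Y hY j
    funext a b
    cases hyab : Y j a b with
    | true => exact ((hcoal ▸ h2) a b hyab).symm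
    | false =>
      cases hlab : L j a b with
      | true => exact absurd (h1 a b hlab) (by simp [hyab])
      | false => rfl
  refine ⟨key, fun Y Y' hY hY' => ?_⟩
  have : ∀ k, Y (j + k) = Y' (j + k) := by
    intro k
    induction k with
    | zero => simp [key Y hY, key Y' hY']
    | succ k ih => rw [← Nat.add_assoc, hY, hY', ih]
  have := this (T - j)
  rwa [Nat.add_sub_cancel' hjT] at this
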